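/- Let k be a field and A a finite-dimensional k-algebra. Suppose M is a finite-dimensional A-module that is multiplicity free (every composition factor occurs exactly once in a composition series), and let S be a simple A-module occurring as a composition factor of M. Then there is at most one submodule N ⊆ M such that S is not a composition factor of N and the quotient M/N has socle isomorphic to S. -/
import Mathlib


/-- The subquotient `q / p` of a module, for submodules `p`, `q` (meaningful when `p ≤ q`). -/
abbrev subquot {R M : Type*} [Ring R] [AddCommGroup M] [Module R M]
    (p q : Submodule R M) :=
  q ⧸ Submodule.comap q.subtype p

/-- `S` occurs as a composition factor (simple subquotient) of `N`. -/
def IsCompositionFactor (R : Type*) [Ring R] (S N : Type*)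
    [AddCommGroup S] [Module R S] [AddCommGroup N] [Module R N] : Prop :=
  ∃ p q : Submodule R N, p ≤ q ∧ Nonempty (subquot p q ≃ₗ[R] S)

/-- A finite length module `M` is multiplicity free if in any composition series of `M`
the successive factors are pairwise non-isomorphic. -/
def MultiplicityFree (R M : Type*) [Ring R] [AddCommGroup M] [Module R M] : Prop :=
  ∀ (s : CompositionSeries (Submodule R M)), s.head = ⊥ → s.last = ⊤ →
    ∀ i j : Fin s.length,
      Nonempty ((subquot (s i.castSucc) (s i.succ)) ≃ₗ[R]
        (subquot (s j.castSucc) (s j.succ))) → i = j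

theorem aux_le {A M S : Type*} [Ring A]
    [AddCommGroup M] [Module A M] [IsArtinian A M]
    [AddCommGroup S] [Module A S] [IsSimpleModule A S]
    (N₁ N₂ : Submodule A M)
    (h₂ : ¬ IsCompositionFactor A S ↥N₂)
    (hsoc₁ : Nonempty
      (↥(sSup {m : Submodule A (M ⧸ N₁) | IsSimpleModule A ↥m}) ≃ₗ[A] S)) :
    N₂ ≤ N₁ := by
  obtain ⟨e⟩ := hsoc₁
  set soc := sSup {m : Submodule A (M ⧸ N₁) | IsSimpleModule A ↥m} with hsoc
  haveI hsocsimple : IsSimpleModule A ↥soc := IsSimpleModule.congr e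
  by_contra hle
  -- the image of N₂ in M ⧸ N₁ is nonzero
  set P := N₂.map N₁.mkQ with hP
  have hPne : P ≠ ⊥ := by
    intro hbot
    apply hle
    intro x hx
    have : N₁.mkQ x ∈ P := Submodule.mem_map_of_mem hx
    rw [hbot, Submodule.mem_bot] at this
    simpa using (Submodule.Quotient.mk_eq_zero N₁).1 this
  -- P contains an atom T
  haveI : IsAtomic (Submodule A (M ⧸ N₁)) :=
    isAtomic_of_orderBot_wellFounded_lt (wellFounded_lt)
  obtain ⟨T, hTatom, hTP⟩ := (IsAtomic.eq_bot_or_exists_atom_le P).resolve_left hPne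
  -- T ≤ soc, and soc is simple hence an atom, so soc = T ≤ P
  have hTsoc : T ≤ soc := le_sSup (by simpa [Set.mem_setOf_eq] using (isSimpleModule_iff_isAtom).2 hTatom)
  have hsocatom : IsAtom soc := (isSimpleModule_iff_isAtom).1 hsocsimple
  have hsocT : soc = T := by
    rcases lt_or_eq_of_le hTsoc with h | h
    · exact absurd (hsocatom.2 T h) hTatom.1
    · exact h.symm
  have hsocP : soc ≤ P := hsocT ▸ hTP
  -- now build a composition factor of N₂ isomorphic to S
  set q' : Submodule A ↥N₂ := Submodule.comap N₂.subtype (Submodule.comap N₁.mkQ soc) with hq'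
  set p' : Submodule A ↥N₂ := Submodule.comap N₂.subtype N₁ with hp'
  have hpq : p' ≤ q' := by
    intro x hx
    simp only [hq', Submodule.mem_comap, Submodule.subtype_apply] at hx ⊢
    have : N₁.mkQ (x : M) = 0 := (Submodule.Quotient.mk_eq_zero N₁).2 hx
    rw [this]; exact zero_mem _
  -- the map q' → soc
  have hmem : ∀ x : ↥q', N₁.mkQ (N₂.subtype (q'.subtype x)) ∈ soc := by
    intro x
    exact x.2
  set ψ : ↥q' →ₗ[A] ↥soc :=
    LinearMap.codRestrict soc (N₁.mkQ ∘ₗ N₂.subtype ∘ₗ q'.subtype) (fun x => hmem x) with hψ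
  set φ : ↥q' →ₗ[A] S := e.toLinearMap ∘ₗ ψ with hφ
  have hsurj : Function.Surjective φ := by
    intro s
    obtain ⟨t, ht⟩ := e.surjective s
    obtain ⟨y, hyN₂, hy⟩ := hsocP t.2
    have hyq : (⟨y, hyN₂⟩ : ↥N₂) ∈ q' := by
      simp only [hq', Submodule.mem_comap, Submodule.subtype_apply]
      simpa [hy] using t.2
    refine ⟨⟨⟨y, hyN₂⟩, hyq⟩, ?_⟩
    rw [hφ, ← ht]
    simp only [LinearMap.comp_apply, LinearEquiv.coe_coe]
    congr 1
    apply Subtype.ext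
    simpa [hψ] using hy
  have hker : LinearMap.ker φ = Submodule.comap q'.subtype p' := by
    ext x
    simp only [LinearMap.mem_ker, hφ, LinearMap.comp_apply, LinearEquiv.coe_coe,
      e.map_eq_zero_iff, Submodule.mem_comap, hp', Submodule.subtype_apply]
    constructor
    · intro hx
      have : N₁.mkQ ((x : ↥N₂) : M) = 0 := congrArg Subtype.val hx
      simpa using (Submodule.Quotient.mk_eq_zero N₁).1 this
    · intro hx
      apply Subtype.ext
      simpa [hψ] using (Submodule.Quotient.mk_eq_zero N₁).2 hx
  exact h₂ ⟨p', q', hpq,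
    ⟨(Submodule.quotEquivOfEq _ _ hker.symm).trans (φ.quotKerEquivOfSurjective hsurj)⟩⟩

/-- Let `A` be a finite-dimensional algebra over a field `k`, `M` a finite-dimensional
multiplicity free `A`-module, and `S` a simple `A`-module occurring as a composition
factor of `M`.  Then there is at most one submodule `N ⊆ M` not having `S` as a
composition factor such that the quotient `M/N` has socle isomorphic to `S`. -/
theorem unique_submodule_with_socle_S
    {k A M S : Type*} [Field k] [Ring A] [Algebra k A] [FiniteDimensional k A]
    [AddCommGroup M] [Module A M] [Module k M] [IsScalarTower k A M]
    [FiniteDimensional k M]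
    [AddCommGroup S] [Module A S] [IsSimpleModule A S]
    (hmf : MultiplicityFree A M)
    (hS : IsCompositionFactor A S M)
    (N₁ N₂ : Submodule A M)
    (h₁ : ¬ IsCompositionFactor A S ↥N₁)
    (h₂ : ¬ IsCompositionFactor A S ↥N₂)
    (hsoc₁ : Nonempty
      (↥(sSup {m : Submodule A (M ⧸ N₁) | IsSimpleModule A ↥m}) ≃ₗ[A] S))
    (hsoc₂ : Nonempty
      (↥(sSup {m : Submodule A (M ⧸ N₂) | IsSimpleModule A ↥m}) ≃ₗ[A] S)) :
    N₁ = N₂ := by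
  haveI : IsArtinian A M := isArtinian_of_tower k inferInstance
  exact le_antisymm (aux_le N₂ N₁ h₁ hsoc₂) (aux_le N₁ N₂ h₂ hsoc₁)
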